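/- If f : [a,b] → ℝ is convex and continuous on [a,b] with a < b, and (1/(b-a)) ∫_a^b f(x) dx = (f(a)+f(b))/2, then f is affine-linear on [a,b], i.e., there exist c, m ∈ ℝ with f(x) = m x + c for all x ∈ [a,b]. -/

import Mathlib

open MeasureTheory intervalIntegral

/-!
A convex function lies below its chord on `[a, b]`, and the chord integrates to
`(b - a) (f a + f b) / 2`. Equality in Hermite–Hadamard therefore says that the nonnegative
continuous function `chord - f` has integral zero, so it vanishes on `[a, b]`.
-/

lemma add_slope_mul_sub (f : ℝ → ℝ) (a b : ℝ) : f a + slope f a b * (b - a) = f b := by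
  rw [mul_comm, ← smul_eq_mul, sub_smul_slope, vsub_eq_sub, add_sub_cancel]

lemma ConvexOn.le_chord {f : ℝ → ℝ} {a b x : ℝ} (hf : ConvexOn ℝ (Set.Icc a b) f)
    (hx : x ∈ Set.Icc a b) : f x ≤ f a + slope f a b * (x - a) := by
  rcases hx.1.eq_or_lt with rfl | hax
  · simp
  have hslope : slope f a x ≤ slope f a b := by
    simpa only [slope_def_field] using hf.secant_mono (Set.left_mem_Icc.2 (hx.1.trans hx.2)) hx
      (Set.right_mem_Icc.2 (hx.1.trans hx.2)) hax.ne' (hax.trans_le hx.2).ne' hx.2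
  calc f x = f a + slope f a x * (x - a) := (add_slope_mul_sub f a x).symm
    _ ≤ f a + slope f a b * (x - a) := by gcongr

lemma integral_chord (f : ℝ → ℝ) (a b : ℝ) :
    ∫ x in a..b, (f a + slope f a b * (x - a)) = (b - a) * ((f a + f b) / 2) := by
  rw [integral_add intervalIntegrable_const (Continuous.intervalIntegrable (by fun_prop) _ _),
    intervalIntegral.integral_const_mul, integral_comp_sub_right (fun x => x), integral_id,
    intervalIntegral.integral_const, smul_eq_mul]
  linear_combination (b - a) / 2 * add_slope_mul_sub f a b

lemma eqOn_of_le_of_integral_eq {f g : ℝ → ℝ} {a b : ℝ} (hab : a < b)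
    (hf : ContinuousOn f (Set.Icc a b)) (hg : ContinuousOn g (Set.Icc a b))
    (hle : ∀ x ∈ Set.Icc a b, f x ≤ g x) (hint : ∫ x in a..b, f x = ∫ x in a..b, g x) :
    Set.EqOn f g (Set.Icc a b) := by
  by_contra hne
  obtain ⟨c, hc, hfgc⟩ := not_forall₂.mp hne
  exact (integral_lt_integral_of_continuousOn_of_le_of_exists_lt hab hf hg
    (fun x hx => hle x (Set.Ioc_subset_Icc_self hx)) ⟨c, hc, (hle c hc).lt_of_ne hfgc⟩).ne hint

/-- Equality case of the one-dimensional Hermite–Hadamard inequality for the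
boundary average: if equality holds, `f` is affine-linear on `[a,b]`. -/
theorem hermite_hadamard_right_eq_iff_affine (a b : ℝ) (hab : a < b) (f : ℝ → ℝ)
    (hf : ConvexOn ℝ (Set.Icc a b) f) (hcont : ContinuousOn f (Set.Icc a b))
    (heq : (1 / (b - a)) * ∫ x in a..b, f x = (f a + f b) / 2) :
    ∃ m c : ℝ, ∀ x ∈ Set.Icc a b, f x = m * x + c := by
  have hint : ∫ x in a..b, f x = ∫ x in a..b, (f a + slope f a b * (x - a)) := by
    rw [integral_chord, ← heq]
    field_simp [sub_ne_zero.2 hab.ne']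
  have hchord : Set.EqOn f (fun x => f a + slope f a b * (x - a)) (Set.Icc a b) :=
    eqOn_of_le_of_integral_eq hab hcont (by fun_prop) (fun x hx => hf.le_chord hx) hint
  exact ⟨slope f a b, f a - slope f a b * a, fun x hx => by rw [hchord hx]; ring⟩
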